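/- Let 𝔥 be a nonzero planar quasi-homogeneous polynomial of type t̂ and degree r+|t̂|. If a planar quasi-homogeneous vector field P of type t̂ and degree k satisfies P = μ·D₀ = λ·X_𝔥 for some quasi-homogeneous polynomials μ of degree k and λ of degree k−r, then P = 0. (Equivalently, the subspaces {μ·D₀} and {λ·X_𝔥} intersect trivially.) -/

import Mathlib

/-!
Euler's identity for the quasi-homogeneous `𝔥` says `D₀ ∧ X_𝔥 = (r + |t̂|) 𝔥`. If `μ D₀ = λ X_𝔥`,
then `λ (D₀ ∧ X_𝔥) = D₀ ∧ (λ X_𝔥) = μ (D₀ ∧ D₀) = 0`, so `(r + |t̂|) λ 𝔥 = 0`; since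
`r + |t̂| > 0` and `𝔥 ≠ 0`, this forces `λ = 0`, hence `P = λ X_𝔥 = 0`.
-/

open MvPolynomial

def IsQH (t : Fin 2 → ℕ) (k : ℕ) (f : MvPolynomial (Fin 2) ℝ) : Prop :=
  ∀ (ε : ℝ) (x : Fin 2 → ℝ),
    eval (fun i => ε ^ t i * x i) f = ε ^ k * eval x f

def IsQHVF (t : Fin 2 → ℕ) (k : ℕ) (F : Fin 2 → MvPolynomial (Fin 2) ℝ) : Prop :=
  ∀ j, IsQH t (k + t j) (F j)

noncomputable def ham (h : MvPolynomial (Fin 2) ℝ) : Fin 2 → MvPolynomial (Fin 2) ℝ :=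
  ![-(pderiv 1 h), pderiv 0 h]

noncomputable def D0 (t : Fin 2 → ℕ) : Fin 2 → MvPolynomial (Fin 2) ℝ :=
  ![C ((t 0 : ℝ)) * X 0, C ((t 1 : ℝ)) * X 1]

namespace MvPolynomial

variable {σ : Type*}

section CommSemiring

variable {R : Type*} [CommSemiring R] (w : σ → ℕ) (a : R)

theorem bind₁_C_pow_mul_X_monomial (d : σ →₀ ℕ) (c : R) :
    bind₁ (fun i => C (a ^ w i) * X i) (monomial d c)
      = monomial d (a ^ Finsupp.weight w d * c) := by
  rw [bind₁_monomial]
  simp only [mul_pow, ← C_pow, ← pow_mul, Finset.prod_mul_distrib, ← map_prod,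
    Finset.prod_pow_eq_pow_sum, Finsupp.weight_apply, Finsupp.sum, smul_eq_mul, mul_comm (w _)]
  rw [monomial_eq, C_mul, Finsupp.prod]
  ring

theorem coeff_bind₁_C_pow_mul_X (f : MvPolynomial σ R) (d : σ →₀ ℕ) :
    coeff d (bind₁ (fun i => C (a ^ w i) * X i) f) = a ^ Finsupp.weight w d * coeff d f := by
  classical
  induction f using MvPolynomial.induction_on' with
  | monomial d' c =>
    rw [bind₁_C_pow_mul_X_monomial, coeff_monomial, coeff_monomial]
    split_ifs with h
    · rw [h]
    · rw [mul_zero]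
  | add p q hp hq => rw [map_add, coeff_add, hp, hq, coeff_add, mul_add]

end CommSemiring

theorem isWeightedHomogeneous_of_eval_pow_mul {K : Type*} [Field K] [CharZero K]
    {w : σ → ℕ} {m : ℕ} {f : MvPolynomial σ K}
    (hf : ∀ (ε : K) (x : σ → K), eval (fun i => ε ^ w i * x i) f = ε ^ m * eval x f) :
    IsWeightedHomogeneous w f m := by
  intro d hd
  have hscale : bind₁ (fun i => C ((2 : K) ^ w i) * X i) f = C (2 ^ m) * f := by
    refine MvPolynomial.funext fun x => ?_
    rw [eval_mul, eval_C, ← hf]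
    exact (eval₂Hom_bind₁ (RingHom.id K) x _ f).trans (by simp)
  have hcoeff := congrArg (coeff d) hscale
  rw [coeff_bind₁_C_pow_mul_X, coeff_C_mul, mul_left_inj' hd] at hcoeff
  exact Nat.pow_right_injective le_rfl (by exact_mod_cast hcoeff)

end MvPolynomial

def wedge {R : Type*} [CommRing R] (F G : Fin 2 → R) : R :=
  F 0 * G 1 - F 1 * G 0

theorem mul_wedge_eq_zero_of_mul_eq_mul {R : Type*} [CommRing R] {F G : Fin 2 → R} {a b : R}
    (h : ∀ j, a * F j = b * G j) : b * wedge F G = 0 := by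
  unfold wedge
  linear_combination F 1 * h 0 - F 0 * h 1

theorem IsQH.isWeightedHomogeneous {t : Fin 2 → ℕ} {m : ℕ} {f : MvPolynomial (Fin 2) ℝ}
    (hf : IsQH t m f) : IsWeightedHomogeneous t f m :=
  isWeightedHomogeneous_of_eval_pow_mul hf

theorem IsQH.wedge_D0_ham {t : Fin 2 → ℕ} {m : ℕ} {f : MvPolynomial (Fin 2) ℝ}
    (hf : IsQH t m f) : wedge (D0 t) (ham f) = C (m : ℝ) * f := by
  have heuler := hf.isWeightedHomogeneous.sum_weight_X_mul_pderiv
  simp only [Fin.sum_univ_two, nsmul_eq_mul] at heuler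
  simp only [wedge, D0, ham, Matrix.cons_val_zero, Matrix.cons_val_one, map_natCast]
  linear_combination heuler

theorem dissipative_inter_hamMultiple_trivial_general (t : Fin 2 → ℕ) (ht : ∀ i, 0 < t i)
    (r : ℕ)
    (𝔥 : MvPolynomial (Fin 2) ℝ) (h𝔥 : IsQH t (r + t 0 + t 1) 𝔥) (h𝔥0 : 𝔥 ≠ 0)
    (P : Fin 2 → MvPolynomial (Fin 2) ℝ)
    (μ lam : MvPolynomial (Fin 2) ℝ)
    (h1 : ∀ j, P j = μ * D0 t j) (h2 : ∀ j, P j = lam * ham 𝔥 j) :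
    ∀ j, P j = 0 := by
  have hwedge : lam * (C ((r + t 0 + t 1 : ℕ) : ℝ) * 𝔥) = 0 := by
    rw [← h𝔥.wedge_D0_ham]
    exact mul_wedge_eq_zero_of_mul_eq_mul fun j => (h1 j).symm.trans (h2 j)
  have hdeg : (C ((r + t 0 + t 1 : ℕ) : ℝ) : MvPolynomial (Fin 2) ℝ) ≠ 0 := by
    rw [Ne, C_eq_zero, Nat.cast_eq_zero]
    have := ht 0
    omega
  have hlam : lam = 0 := (mul_eq_zero.mp hwedge).resolve_right (mul_ne_zero hdeg h𝔥0)
  intro j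
  rw [h2 j, hlam, zero_mul]

/-- The subspaces `{μ·D₀}` and `{λ·X_𝔥}` intersect trivially: if a quasi-homogeneous
vector field can be written in both forms, it vanishes. -/
theorem dissipative_inter_hamMultiple_trivial (t : Fin 2 → ℕ) (ht : ∀ i, 0 < t i)
    (r k : ℕ) (hrk : r ≤ k)
    (𝔥 : MvPolynomial (Fin 2) ℝ) (h𝔥 : IsQH t (r + t 0 + t 1) 𝔥) (h𝔥0 : 𝔥 ≠ 0)
    (P : Fin 2 → MvPolynomial (Fin 2) ℝ) (hP : IsQHVF t k P)
    (μ lam : MvPolynomial (Fin 2) ℝ) (hμ : IsQH t k μ) (hlam : IsQH t (k - r) lam)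
    (h1 : ∀ j, P j = μ * D0 t j) (h2 : ∀ j, P j = lam * ham 𝔥 j) :
    ∀ j, P j = 0 :=
  dissipative_inter_hamMultiple_trivial_general t ht r 𝔥 h𝔥 h𝔥0 P μ lam h1 h2
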